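/- arXiv:2603.19524 — 3 statements merged into one kernel-verified Lean document; each statement's English description precedes it below -/
import Mathlib

section
/- Let D ⊆ ℝⁿ be a compact set, g : D → ℝ Lipschitz, and let (x₁,y₁),…,(x_N,y_N) be an ε̄-noisy dataset generated by g. For any ε ≥ ε̄, the optimization problem of minimizing the Lipschitz seminorm Lip(f) over all Lipschitz functions f : D → ℝ subject to the constraint max_i ‖yᵢ − f(xᵢ)‖ ≤ ε attains its minimum: there exists a Lipschitz function f* : D → ℝ with max_i ‖yᵢ − f*(xᵢ)‖ ≤ ε and Lip(f*) ≤ Lip(f) for every Lipschitz f : D → ℝ satisfying max_i ‖yᵢ − f(xᵢ)‖ ≤ ε. -/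
open scoped NNReal

/-- The Lipschitz seminorm of `f` on the set `D`:
`Lip(f) := inf {γ ≥ 0 | ‖f x - f y‖ ≤ γ ‖x - y‖ for all x, y ∈ D}`. -/
noncomputable def lipSemi {n : ℕ} (D : Set (EuclideanSpace ℝ (Fin n)))
    (f : EuclideanSpace ℝ (Fin n) → ℝ) : ℝ :=
  sInf {γ : ℝ | 0 ≤ γ ∧ ∀ x ∈ D, ∀ y ∈ D, ‖f x - f y‖ ≤ γ * ‖x - y‖}

theorem stmt2 {n N : ℕ} (hN : 0 < N)
    (D : Set (EuclideanSpace ℝ (Fin n))) (hD : IsCompact D)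
    (g : EuclideanSpace ℝ (Fin n) → ℝ)
    (hg : ∃ C : ℝ≥0, LipschitzOnWith C g D)
    (xs : Fin N → EuclideanSpace ℝ (Fin n)) (ys : Fin N → ℝ)
    (hxs : ∀ i, xs i ∈ D)
    (εbar ε : ℝ) (hεbar : 0 ≤ εbar) (hε : εbar ≤ ε)
    (hnoise : ∀ i, ‖g (xs i) - ys i‖ ≤ εbar) :
    ∃ fstar : EuclideanSpace ℝ (Fin n) → ℝ,
      (∃ C : ℝ≥0, LipschitzOnWith C fstar D) ∧
      (∀ i, ‖ys i - fstar (xs i)‖ ≤ ε) ∧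
      ∀ f : EuclideanSpace ℝ (Fin n) → ℝ,
        (∃ C : ℝ≥0, LipschitzOnWith C f D) →
        (∀ i, ‖ys i - f (xs i)‖ ≤ ε) →
        lipSemi D fstar ≤ lipSemi D f := by
  haveI : Nonempty (Fin N) := ⟨⟨0, hN⟩⟩
  have hne : (Finset.univ : Finset (Fin N)).Nonempty := Finset.univ_nonempty
  have hne2 : (Finset.univ : Finset (Fin N × Fin N)).Nonempty := Finset.univ_nonempty
  have hεnn : 0 ≤ ε := le_trans hεbar hε
  set L0 : ℝ := ((Finset.univ : Finset (Fin N × Fin N)).sup'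
      hne2 fun p => (‖ys p.1 - ys p.2‖ - 2 * ε) / ‖xs p.1 - xs p.2‖) ⊔ 0 with hL0def
  have hL0nn : 0 ≤ L0 := le_sup_right
  -- pairwise bound
  have key : ∀ i j, ‖ys i - ys j‖ - 2 * ε ≤ L0 * ‖xs i - xs j‖ := by
    intro i j
    by_cases h : xs i = xs j
    · have hd : ‖xs i - xs j‖ = 0 := by rw [h, sub_self, norm_zero]
      have h1 : ys i - ys j = (ys i - g (xs i)) + (g (xs j) - ys j) := by rw [h]; ring
      have h2 : ‖ys i - ys j‖ ≤ ‖ys i - g (xs i)‖ + ‖g (xs j) - ys j‖ := by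
        rw [h1]; exact norm_add_le _ _
      have h3 : ‖ys i - g (xs i)‖ = ‖g (xs i) - ys i‖ := norm_sub_rev _ _
      have h4 := hnoise i
      have h5 := hnoise j
      rw [hd, mul_zero]
      rw [h3] at h2
      linarith
    · have hd : 0 < ‖xs i - xs j‖ := by
        rw [norm_pos_iff]; exact sub_ne_zero_of_ne h
      have h1 : (‖ys i - ys j‖ - 2 * ε) / ‖xs i - xs j‖ ≤ L0 :=
        le_trans (Finset.le_sup' (fun p : Fin N × Fin N =>
          (‖ys p.1 - ys p.2‖ - 2 * ε) / ‖xs p.1 - xs p.2‖) (Finset.mem_univ (i, j))) le_sup_left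
      calc ‖ys i - ys j‖ - 2 * ε
          = (‖ys i - ys j‖ - 2 * ε) / ‖xs i - xs j‖ * ‖xs i - xs j‖ := by
            field_simp
        _ ≤ L0 * ‖xs i - xs j‖ := mul_le_mul_of_nonneg_right h1 hd.le
  -- the interpolant
  set fstar : EuclideanSpace ℝ (Fin n) → ℝ :=
    fun x => Finset.univ.inf' hne fun i => ys i + ε + L0 * ‖x - xs i‖ with hfdef
  have lipb : ∀ x y, fstar x ≤ fstar y + L0 * ‖x - y‖ := by
    intro x y
    obtain ⟨j, -, hj⟩ := Finset.exists_mem_eq_inf' hne (fun i => ys i + ε + L0 * ‖y - xs i‖)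
    have h1 : fstar x ≤ ys j + ε + L0 * ‖x - xs j‖ :=
      Finset.inf'_le _ (Finset.mem_univ j)
    have h2 : ‖x - xs j‖ ≤ ‖x - y‖ + ‖y - xs j‖ := norm_sub_le_norm_sub_add_norm_sub x y (xs j)
    have h3 : L0 * ‖x - xs j‖ ≤ L0 * (‖x - y‖ + ‖y - xs j‖) :=
      mul_le_mul_of_nonneg_left h2 hL0nn
    have h4 : fstar y = ys j + ε + L0 * ‖y - xs j‖ := hj
    rw [h4]; nlinarith
  have lipabs : ∀ x y, ‖fstar x - fstar y‖ ≤ L0 * ‖x - y‖ := by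
    intro x y
    rw [Real.norm_eq_abs, abs_le]
    have h1 := lipb x y
    have h2 := lipb y x
    rw [norm_sub_rev] at h2
    constructor <;> linarith
  -- feasibility
  have hfeas : ∀ i, ‖ys i - fstar (xs i)‖ ≤ ε := by
    intro i
    have hub : fstar (xs i) ≤ ys i + ε := by
      have h := Finset.inf'_le (fun j => ys j + ε + L0 * ‖xs i - xs j‖) (Finset.mem_univ i)
      simp only [sub_self, norm_zero, mul_zero, add_zero] at h
      exact h
    have hlb : ys i - ε ≤ fstar (xs i) := by
      apply Finset.le_inf'
      intro j _
      have := key i j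
      have hn : ys i - ys j ≤ ‖ys i - ys j‖ := le_abs_self _
      linarith
    rw [Real.norm_eq_abs, abs_le]
    constructor <;> linarith
  -- L0 is in the seminorm set for fstar
  have hmem : L0 ∈ {γ : ℝ | 0 ≤ γ ∧ ∀ x ∈ D, ∀ y ∈ D, ‖fstar x - fstar y‖ ≤ γ * ‖x - y‖} :=
    ⟨hL0nn, fun x _ y _ => lipabs x y⟩
  have hbdd : ∀ f : EuclideanSpace ℝ (Fin n) → ℝ,
      BddBelow {γ : ℝ | 0 ≤ γ ∧ ∀ x ∈ D, ∀ y ∈ D, ‖f x - f y‖ ≤ γ * ‖x - y‖} :=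
    fun f => ⟨0, fun γ hγ => hγ.1⟩
  have hle : lipSemi D fstar ≤ L0 := csInf_le (hbdd fstar) hmem
  refine ⟨fstar, ⟨⟨L0, hL0nn⟩, ?_⟩, hfeas, ?_⟩
  · apply LipschitzOnWith.of_dist_le_mul
    intro x _ y _
    rw [dist_eq_norm, dist_eq_norm]
    exact lipabs x y
  · intro f ⟨C, hC⟩ hf
    have hCset : (C : ℝ) ∈ {γ : ℝ | 0 ≤ γ ∧ ∀ x ∈ D, ∀ y ∈ D, ‖f x - f y‖ ≤ γ * ‖x - y‖} := by
      refine ⟨C.coe_nonneg, fun x hx y hy => ?_⟩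
      have := hC.dist_le_mul x hx y hy
      rwa [dist_eq_norm, dist_eq_norm] at this
    have hL0γ : ∀ γ ∈ {γ : ℝ | 0 ≤ γ ∧ ∀ x ∈ D, ∀ y ∈ D, ‖f x - f y‖ ≤ γ * ‖x - y‖},
        L0 ≤ γ := by
      rintro γ ⟨hγ0, hγ⟩
      rw [hL0def]
      apply sup_le _ hγ0
      apply Finset.sup'_le
      rintro ⟨i, j⟩ -
      by_cases h : xs i = xs j
      · have hd : ‖xs i - xs j‖ = 0 := by rw [h, sub_self, norm_zero]
        simp only [hd, div_zero]
        exact hγ0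
      · have hd : 0 < ‖xs i - xs j‖ := by
          rw [norm_pos_iff]; exact sub_ne_zero_of_ne h
        rw [div_le_iff₀ hd]
        have h1 : ‖ys i - ys j‖ ≤ ‖ys i - f (xs i)‖ + ‖f (xs i) - f (xs j)‖ + ‖f (xs j) - ys j‖ := by
          have : ys i - ys j = (ys i - f (xs i)) + (f (xs i) - f (xs j)) + (f (xs j) - ys j) := by ring
          rw [this]
          exact le_trans (norm_add_le _ _) (by gcongr; exact norm_add_le _ _)
        have h2 := hγ (xs i) (hxs i) (xs j) (hxs j)
        have h3 := hf i
        have h4 : ‖f (xs j) - ys j‖ = ‖ys j - f (xs j)‖ := norm_sub_rev _ _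
        have h5 := hf j
        rw [h4] at h1
        linarith
    have : L0 ≤ lipSemi D f :=
      le_csInf ⟨(C : ℝ), hCset⟩ hL0γ
    exact le_trans hle this
end

section
/- Let D ⊆ ℝⁿ be a compact set, g : D → ℝ Lipschitz with constant l_g, and let (x₁,y₁),…,(x_N,y_N) be an ε̄-noisy dataset generated by g with covering radius h(X,D) = h > 0. Fix ε ≥ ε̄. If f* : D → ℝ minimizes the Lipschitz seminorm over all Lipschitz functions f : D → ℝ with max_i ‖yᵢ − f(xᵢ)‖ ≤ ε, then sup_{x∈D} ‖g(x) − f*(x)‖ ≤ 2(l_g·h + ε). -/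
/-!
The data-generating function `g` is itself admissible, so minimality gives
`Lip(f*) ≤ l_g`. Given `x ∈ D`, pick a data point `xᵢ` with `‖x - xᵢ‖ ≤ h`; then
`|g x - f* x| ≤ |g x - g xᵢ| + |g xᵢ - yᵢ| + |yᵢ - f* xᵢ| + |f* xᵢ - f* x|`,
which is at most `l_g h + ε̄ + ε + l_g h`.
-/

open scoped NNReal

theorem Metric.exists_dist_le_of_infDist_range_le {α ι : Type*} [PseudoMetricSpace α]
    [Finite ι] [Nonempty ι] {xs : ι → α} {x : α} {h : ℝ}
    (hx : Metric.infDist x (Set.range xs) ≤ h) : ∃ i, dist x (xs i) ≤ h := by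
  obtain ⟨_, ⟨i, rfl⟩, hi⟩ := (Set.finite_range xs).isCompact.exists_infDist_eq_dist
    (Set.range_nonempty xs) x
  exact ⟨i, hi ▸ hx⟩

section LipSemi

variable {n : ℕ} {D : Set (EuclideanSpace ℝ (Fin n))} {f : EuclideanSpace ℝ (Fin n) → ℝ}

lemma lipSemi_le {C : ℝ} (hC : 0 ≤ C)
    (hf : ∀ x ∈ D, ∀ y ∈ D, ‖f x - f y‖ ≤ C * ‖x - y‖) :
    lipSemi D f ≤ C :=
  csInf_le ⟨0, fun _ hγ => hγ.1⟩ ⟨hC, hf⟩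

/-- The infimum defining `lipSemi` is itself a Lipschitz constant, provided some constant exists
(otherwise `lipSemi D f = sInf ∅ = 0`). -/
lemma LipschitzOnWith.norm_sub_le_lipSemi_mul {C : ℝ≥0} (hf : LipschitzOnWith C f D)
    {x y : EuclideanSpace ℝ (Fin n)} (hx : x ∈ D) (hy : y ∈ D) :
    ‖f x - f y‖ ≤ lipSemi D f * ‖x - y‖ := by
  rcases eq_or_ne x y with rfl | hxy
  · simp
  have hpos : 0 < ‖x - y‖ := norm_pos_iff.mpr (sub_ne_zero.mpr hxy)
  rw [← div_le_iff₀ hpos]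
  refine le_csInf ⟨C, C.coe_nonneg, fun a ha b hb => ?_⟩ fun γ hγ => ?_
  · simpa only [dist_eq_norm] using hf.dist_le_mul a ha b hb
  · exact (div_le_iff₀ hpos).mpr (hγ.2 x hx y hy)

end LipSemi

theorem stmt3_general {n N : ℕ} (hN : 0 < N)
    (D : Set (EuclideanSpace ℝ (Fin n)))
    (g : EuclideanSpace ℝ (Fin n) → ℝ)
    (lg : ℝ) (hlg : 0 ≤ lg)
    (hg : ∀ x ∈ D, ∀ y ∈ D, ‖g x - g y‖ ≤ lg * ‖x - y‖)
    (xs : Fin N → EuclideanSpace ℝ (Fin n)) (ys : Fin N → ℝ)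
    (hxs : ∀ i, xs i ∈ D)
    (εbar ε h : ℝ) (hε : εbar ≤ ε)
    (hcov : ∀ x ∈ D, Metric.infDist x (Set.range xs) ≤ h)
    (hnoise : ∀ i, ‖g (xs i) - ys i‖ ≤ εbar)
    (fstar : EuclideanSpace ℝ (Fin n) → ℝ)
    (hfstarLip : ∃ C : ℝ≥0, LipschitzOnWith C fstar D)
    (hfstarLoss : ∀ i, ‖ys i - fstar (xs i)‖ ≤ ε)
    (hfstarMin : ∀ f : EuclideanSpace ℝ (Fin n) → ℝ,
        (∃ C : ℝ≥0, LipschitzOnWith C f D) →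
        (∀ i, ‖ys i - f (xs i)‖ ≤ ε) →
        lipSemi D fstar ≤ lipSemi D f) :
    ∀ x ∈ D, ‖g x - fstar x‖ ≤ 2 * (lg * h + ε) := by
  have hgLip : LipschitzOnWith ⟨lg, hlg⟩ g D :=
    LipschitzOnWith.of_dist_le_mul fun x hx y hy => by
      rw [dist_eq_norm, dist_eq_norm]; exact hg x hx y hy
  have hgLoss : ∀ i, ‖ys i - g (xs i)‖ ≤ ε := fun i =>
    norm_sub_rev (g (xs i)) _ ▸ (hnoise i).trans hε
  have hL : lipSemi D fstar ≤ lg := (hfstarMin g ⟨_, hgLip⟩ hgLoss).trans (lipSemi_le hlg hg)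
  obtain ⟨C, hfstarC⟩ := hfstarLip
  intro x hx
  have : Nonempty (Fin N) := ⟨⟨0, hN⟩⟩
  obtain ⟨i, hi⟩ := Metric.exists_dist_le_of_infDist_range_le (hcov x hx)
  rw [dist_eq_norm] at hi
  have hgx : ‖g x - g (xs i)‖ ≤ lg * h := (hg x hx _ (hxs i)).trans (by gcongr)
  have hdata : ‖g (xs i) - fstar (xs i)‖ ≤ ε + ε :=
    (norm_sub_le_norm_sub_add_norm_sub _ (ys i) _).trans
      (add_le_add ((hnoise i).trans hε) (hfstarLoss i))
  have hfx : ‖fstar (xs i) - fstar x‖ ≤ lg * h := calc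
    _ ≤ lipSemi D fstar * ‖x - xs i‖ :=
      norm_sub_rev x (xs i) ▸ hfstarC.norm_sub_le_lipSemi_mul (hxs i) hx
    _ ≤ lg * h := mul_le_mul hL hi (norm_nonneg _) hlg
  calc ‖g x - fstar x‖
      ≤ ‖g x - g (xs i)‖ + ‖g (xs i) - fstar (xs i)‖ + ‖fstar (xs i) - fstar x‖ := by
        simpa only [dist_eq_norm] using dist_triangle4 (g x) (g (xs i)) (fstar (xs i)) (fstar x)
    _ ≤ lg * h + (ε + ε) + lg * h := by gcongr
    _ = 2 * (lg * h + ε) := by ring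

theorem stmt3 {n N : ℕ} (hN : 0 < N)
    (D : Set (EuclideanSpace ℝ (Fin n))) (hD : IsCompact D)
    (g : EuclideanSpace ℝ (Fin n) → ℝ)
    (lg : ℝ) (hlg : 0 ≤ lg)
    (hg : ∀ x ∈ D, ∀ y ∈ D, ‖g x - g y‖ ≤ lg * ‖x - y‖)
    (xs : Fin N → EuclideanSpace ℝ (Fin n)) (ys : Fin N → ℝ)
    (hxs : ∀ i, xs i ∈ D)
    (εbar ε h : ℝ) (hεbar : 0 ≤ εbar) (hε : εbar ≤ ε) (hh : 0 < h)
    (hcov : ∀ x ∈ D, Metric.infDist x (Set.range xs) ≤ h)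
    (hnoise : ∀ i, ‖g (xs i) - ys i‖ ≤ εbar)
    (fstar : EuclideanSpace ℝ (Fin n) → ℝ)
    (hfstarLip : ∃ C : ℝ≥0, LipschitzOnWith C fstar D)
    (hfstarLoss : ∀ i, ‖ys i - fstar (xs i)‖ ≤ ε)
    (hfstarMin : ∀ f : EuclideanSpace ℝ (Fin n) → ℝ,
        (∃ C : ℝ≥0, LipschitzOnWith C f D) →
        (∀ i, ‖ys i - f (xs i)‖ ≤ ε) →
        lipSemi D fstar ≤ lipSemi D f) :
    ∀ x ∈ D, ‖g x - fstar x‖ ≤ 2 * (lg * h + ε) :=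
  stmt3_general hN D g lg hlg hg xs ys hxs εbar ε h hε hcov hnoise fstar hfstarLip hfstarLoss
    hfstarMin
end

section
/- Fix n ∈ ℕ, n ≥ 1, and let D = [0,1]ⁿ. There exist constants k₁ > 0, k₂ > 0 and N₀ ∈ ℕ depending only on n such that for every δ ∈ (0,1) and every N ≥ N₀, if x₁,…,x_N are sampled i.i.d. from the uniform distribution on D, then with probability at least 1 − δ the covering radius satisfies h({x₁,…,x_N}, D) ≤ k₁·(log(k₂·N/δ)/N)^{1/n}. -/
/-!
Cut `[0,1]ⁿ` into `mⁿ` grid cells of side `1/m`, each of diameter `√n/m`. If every cell contains a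
sample, the covering radius is at most `√n/m`. A fixed cell is missed by all `N` samples with
probability `(1 - m⁻ⁿ)ᴺ ≤ exp (-N/mⁿ)`, so by the union bound some cell is missed with probability
at most `mⁿ exp (-N/mⁿ)`. With `t = log (2N/δ)` and `m ≈ (N/t)^{1/n}/2`, this is at most
`(N/t) e⁻ᵗ = δ/(2t) ≤ δ`, while `1/m ≤ 2 (t/N)^{1/n}`. (When `t > N` take `m = 1`: a single sample
already meets the only cell.)
-/

open MeasureTheory Set

def unitCube (ι : Type*) : Set (EuclideanSpace ℝ ι) := {x | ∀ i, x i ∈ Icc (0 : ℝ) 1}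

def gridCell {ι : Type*} (m : ℕ) (c : ι → Fin m) : Set (EuclideanSpace ℝ ι) :=
  {x | ∀ i, x i ∈ Icc ((c i : ℝ) / m) ((c i + 1) / m)}

section Grid

variable {ι : Type*} {m : ℕ}

theorem gridCell_eq_preimage (c : ι → Fin m) :
    gridCell m c = (MeasurableEquiv.toLp 2 (ι → ℝ)).symm ⁻¹'
      univ.pi fun i => Icc ((c i : ℝ) / m) ((c i + 1) / m) := by
  ext x
  simp only [gridCell, mem_preimage, mem_univ_pi]
  rfl

theorem measurableSet_gridCell [Fintype ι] (c : ι → Fin m) : MeasurableSet (gridCell m c) := by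
  rw [gridCell_eq_preimage]
  exact MeasurableEquiv.measurableSet_preimage _ |>.2 (.univ_pi fun _ => measurableSet_Icc)

theorem volume_gridCell [Fintype ι] (c : ι → Fin m) :
    volume (gridCell m c) = ENNReal.ofReal ((m : ℝ)⁻¹ ^ Fintype.card ι) := by
  rw [gridCell_eq_preimage,
    (EuclideanSpace.volume_preserving_symm_measurableEquiv_toLp ι).measure_preimage
      (MeasurableSet.univ_pi fun _ => measurableSet_Icc).nullMeasurableSet, volume_pi_pi]
  simp_rw [Real.volume_Icc, add_div, add_sub_cancel_left, one_div]
  rw [Finset.prod_const, Finset.card_univ, ENNReal.ofReal_pow (by positivity)]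

theorem unitCube_eq_gridCell_one : unitCube ι = gridCell 1 0 := by
  ext x
  simp [unitCube, gridCell]

theorem volume_unitCube [Fintype ι] : volume (unitCube ι) = 1 := by
  simp [unitCube_eq_gridCell_one, volume_gridCell]

instance [Fintype ι] : IsProbabilityMeasure (volume.restrict (unitCube ι)) :=
  ⟨by rw [Measure.restrict_apply_univ, volume_unitCube]⟩

theorem gridCell_subset_unitCube (c : ι → Fin m) : gridCell m c ⊆ unitCube ι := by
  intro x hx i
  have hm : (0 : ℝ) < m := Nat.cast_pos.2 (c i).pos
  have hc : (c i : ℝ) + 1 ≤ m := by exact_mod_cast (c i).isLt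
  exact ⟨(div_nonneg (Nat.cast_nonneg _) hm.le).trans (hx i).1,
    (hx i).2.trans ((div_le_one hm).2 hc)⟩

theorem exists_fin_mem_Icc_div (hm : 0 < m) {a : ℝ} (ha : a ∈ Icc (0 : ℝ) 1) :
    ∃ k : Fin m, a ∈ Icc ((k : ℝ) / m) ((k + 1) / m) := by
  have hm' : (0 : ℝ) < m := Nat.cast_pos.2 hm
  refine ⟨⟨min ⌊a * m⌋₊ (m - 1), by omega⟩, ?_, ?_⟩
  · rw [div_le_iff₀ hm']
    exact (Nat.cast_le.2 (min_le_left _ _)).trans (Nat.floor_le (by nlinarith [ha.1]))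
  · rw [le_div_iff₀ hm', Fin.val_mk]
    rcases le_total ⌊a * m⌋₊ (m - 1) with h | h
    · rw [min_eq_left h]
      exact (Nat.lt_floor_add_one _).le
    · rw [min_eq_right h, Nat.cast_sub hm, Nat.cast_one, sub_add_cancel]
      nlinarith [ha.2]

theorem exists_mem_gridCell (hm : 0 < m) {x : EuclideanSpace ℝ ι} (hx : x ∈ unitCube ι) :
    ∃ c : ι → Fin m, x ∈ gridCell m c := by
  choose c hc using fun i => exists_fin_mem_Icc_div hm (hx i)
  exact ⟨c, hc⟩

theorem dist_le_of_mem_gridCell [Fintype ι] {c : ι → Fin m} {x y : EuclideanSpace ℝ ι}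
    (hx : x ∈ gridCell m c) (hy : y ∈ gridCell m c) :
    dist x y ≤ √(Fintype.card ι) / m := by
  have hcoord : ∀ i, dist (x i) (y i) ^ 2 ≤ ((m : ℝ)⁻¹) ^ 2 := fun i => by
    have hlen : ((c i : ℝ) + 1) / m - (c i) / m = (m : ℝ)⁻¹ := by ring
    have := (hx i).1; have := (hx i).2; have := (hy i).1; have := (hy i).2
    rw [Real.dist_eq]
    exact pow_le_pow_left₀ (abs_nonneg _) (abs_sub_le_iff.2 ⟨by linarith, by linarith⟩) 2
  calc dist x y = √(∑ i, dist (x i) (y i) ^ 2) := EuclideanSpace.dist_eq x y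
    _ ≤ √(∑ _i : ι, ((m : ℝ)⁻¹) ^ 2) := Real.sqrt_le_sqrt (Finset.sum_le_sum fun i _ => hcoord i)
    _ = √(Fintype.card ι) / m := by
      rw [Finset.sum_const, Finset.card_univ, nsmul_eq_mul, Real.sqrt_mul (Nat.cast_nonneg _),
        Real.sqrt_sq (by positivity), div_eq_mul_inv]

theorem infDist_range_le_of_forall_gridCell [Fintype ι] {κ : Type*} (hm : 0 < m)
    {ω : κ → EuclideanSpace ℝ ι} (hω : ∀ c : ι → Fin m, ∃ k, ω k ∈ gridCell m c)
    {x : EuclideanSpace ℝ ι} (hx : x ∈ unitCube ι) :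
    Metric.infDist x (range ω) ≤ √(Fintype.card ι) / m := by
  obtain ⟨c, hxc⟩ := exists_mem_gridCell hm hx
  obtain ⟨k, hk⟩ := hω c
  exact (Metric.infDist_le_dist_of_mem (mem_range_self k)).trans (dist_le_of_mem_gridCell hxc hk)

end Grid

open scoped ENNReal

theorem measure_pi_forall_exists_mem_ge {α ι J : Type*} [MeasurableSpace α] [Fintype ι] [Fintype J]
    (μ : Measure α) [IsProbabilityMeasure μ] {A : J → Set α} (hA : ∀ j, MeasurableSet (A j))
    {q : ℝ≥0∞} (hq : ∀ j, q ≤ μ (A j)) :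
    1 - Fintype.card J * (1 - q) ^ Fintype.card ι ≤
      Measure.pi (fun _ : ι => μ) {ω | ∀ j, ∃ i, ω i ∈ A j} := by
  set P := Measure.pi fun _ : ι => μ
  have hmiss : {ω : ι → α | ∀ j, ∃ i, ω i ∈ A j}ᶜ = ⋃ j, univ.pi fun _ => (A j)ᶜ := by
    ext ω
    simp
  have hbad : P {ω | ∀ j, ∃ i, ω i ∈ A j}ᶜ ≤ Fintype.card J * (1 - q) ^ Fintype.card ι :=
    calc P {ω | ∀ j, ∃ i, ω i ∈ A j}ᶜ ≤ ∑ j, P (univ.pi fun _ => (A j)ᶜ) :=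
          hmiss ▸ measure_iUnion_fintype_le P _
      _ ≤ ∑ _j : J, (1 - q) ^ Fintype.card ι := Finset.sum_le_sum fun j _ => by
          rw [Measure.pi_pi, Finset.prod_const, Finset.card_univ, prob_compl_eq_one_sub (hA j)]
          gcongr
          exact hq j
      _ = Fintype.card J * (1 - q) ^ Fintype.card ι := by
          rw [Finset.sum_const, Finset.card_univ, nsmul_eq_mul]
  calc 1 - Fintype.card J * (1 - q) ^ Fintype.card ι ≤ 1 - P {ω | ∀ j, ∃ i, ω i ∈ A j}ᶜ :=
        tsub_le_tsub_left hbad 1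
    _ ≤ P {ω | ∀ j, ∃ i, ω i ∈ A j} := by
        rw [tsub_le_iff_right, ← measure_univ (μ := P)]
        exact measure_univ_le_add_compl _

theorem one_sub_inv_pow_le_exp_neg {M : ℝ} (hM : 1 ≤ M) (N : ℕ) :
    (1 - M⁻¹) ^ N ≤ Real.exp (-(N / M)) := by
  calc (1 - M⁻¹) ^ N ≤ Real.exp (-M⁻¹) ^ N :=
        pow_le_pow_left₀ (sub_nonneg.2 (inv_le_one_of_one_le₀ hM)) (Real.one_sub_le_exp_neg _) N
    _ = Real.exp (-(N / M)) := by rw [← Real.exp_nat_mul, div_eq_mul_inv, mul_neg]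

theorem mul_one_sub_inv_pow_le {M t : ℝ} {N : ℕ} (hM : 1 ≤ M) (ht : 0 < t) (hMN : M ≤ N / t) :
    M * (1 - M⁻¹) ^ N ≤ N / t * Real.exp (-t) := by
  have htM : t ≤ N / M := by
    rwa [le_div_iff₀ (by positivity), mul_comm, ← le_div_iff₀ ht]
  exact mul_le_mul hMN
    ((one_sub_inv_pow_le_exp_neg hM N).trans (Real.exp_le_exp.2 (neg_le_neg htM)))
    (pow_nonneg (sub_nonneg.2 (inv_le_one_of_one_le₀ hM)) N) (div_nonneg (Nat.cast_nonneg _) ht.le)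

theorem exists_grid_resolution {n N : ℕ} (hn : n ≠ 0) (hN : N ≠ 0) {t : ℝ} (ht : 0 < t) :
    ∃ m : ℕ, 0 < m ∧ (m : ℝ)⁻¹ ≤ 2 * (t / N) ^ ((1 : ℝ) / n) ∧
      (m : ℝ) ^ n * (1 - (m : ℝ)⁻¹ ^ n) ^ N ≤ N / t * Real.exp (-t) := by
  set r := (t / N) ^ ((1 : ℝ) / n)
  have hr : 0 < r := by positivity
  have hrn : r⁻¹ ^ n = N / t := by
    rw [← Real.inv_rpow (by positivity), inv_div, one_div,
      Real.rpow_inv_natCast_pow (by positivity) hn]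
  rcases le_or_gt r 1 with hr1 | hr1
  · have hceil : 2⁻¹ ≤ (2 * r)⁻¹ := by
      rw [mul_inv]; exact le_mul_of_one_le_right (by norm_num) (one_le_inv₀ hr |>.2 hr1)
    set m := ⌈(2 * r)⁻¹⌉₊
    have hm0 : 0 < m := Nat.ceil_pos.2 (by positivity)
    have hm : (m : ℝ) ≤ r⁻¹ :=
      calc (m : ℝ) ≤ 2 * (2 * r)⁻¹ := Nat.ceil_le_two_mul hceil
        _ = r⁻¹ := by rw [mul_inv, ← mul_assoc, mul_inv_cancel₀ two_ne_zero, one_mul]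
    refine ⟨m, hm0, inv_le_of_inv_le₀ (by positivity) (Nat.le_ceil _), ?_⟩
    rw [inv_pow]
    exact mul_one_sub_inv_pow_le (one_le_pow₀ (by exact_mod_cast hm0)) ht
      (hrn ▸ pow_le_pow_left₀ (Nat.cast_nonneg _) hm n)
  · refine ⟨1, one_pos, ?_, ?_⟩
    · rw [Nat.cast_one, inv_one]; linarith
    · simp only [Nat.cast_one, one_pow, inv_one, sub_self, zero_pow hN, mul_zero]
      positivity

theorem half_lt_log_two_mul_div {N δ : ℝ} (hN : 1 ≤ N) (hδ : 0 < δ) (hδ1 : δ < 1) :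
    1 / 2 < Real.log (2 * N / δ) := by
  have h2 : (2 : ℝ) ≤ 2 * N / δ := by
    rw [le_div_iff₀ hδ]; nlinarith
  linarith [Real.log_two_gt_d9, Real.log_le_log two_pos h2]

theorem div_log_mul_exp_neg_log_le {N δ : ℝ} (hN : 1 ≤ N) (hδ : 0 < δ) (hδ1 : δ < 1) :
    N / Real.log (2 * N / δ) * Real.exp (-Real.log (2 * N / δ)) ≤ δ := by
  have ht := half_lt_log_two_mul_div hN hδ hδ1
  rw [Real.exp_neg, Real.exp_log (by positivity)]
  calc N / Real.log (2 * N / δ) * (2 * N / δ)⁻¹ = δ / (2 * Real.log (2 * N / δ)) := by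
        field_simp
    _ ≤ δ := div_le_self hδ.le (by linarith)

theorem ofReal_natCast_pow_mul_one_sub_inv_pow {m : ℕ} (hm : 0 < m) (n N : ℕ) :
    ENNReal.ofReal ((m : ℝ) ^ n * (1 - (m : ℝ)⁻¹ ^ n) ^ N) =
      (m : ℝ≥0∞) ^ n * (1 - ENNReal.ofReal ((m : ℝ)⁻¹ ^ n)) ^ N := by
  have hq : (m : ℝ)⁻¹ ^ n ≤ 1 :=
    pow_le_one₀ (by positivity) (inv_le_one_of_one_le₀ (Nat.one_le_cast.2 hm))
  rw [ENNReal.ofReal_mul (by positivity), ENNReal.ofReal_pow (sub_nonneg.2 hq),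
    ENNReal.ofReal_sub _ (by positivity), ENNReal.ofReal_one,
    ENNReal.ofReal_pow (Nat.cast_nonneg _), ENNReal.ofReal_natCast]

theorem stmt13 (n : ℕ) (hn : 1 ≤ n)
    (D : Set (EuclideanSpace ℝ (Fin n)))
    (hD : D = {x : EuclideanSpace ℝ (Fin n) | ∀ i, x i ∈ Set.Icc (0 : ℝ) 1}) :
    ∃ k₁ > (0 : ℝ), ∃ k₂ > (0 : ℝ), ∃ N₀ : ℕ,
      ∀ δ : ℝ, 0 < δ → δ < 1 → ∀ N : ℕ, N₀ ≤ N →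
        ENNReal.ofReal (1 - δ) ≤
          (Measure.pi fun _ : Fin N => volume.restrict D)
            {ω : Fin N → EuclideanSpace ℝ (Fin n) |
              ∀ x ∈ D, Metric.infDist x (Set.range ω) ≤
                k₁ * (Real.log (k₂ * N / δ) / N) ^ ((1 : ℝ) / n)} := by
  obtain rfl : D = unitCube (Fin n) := hD
  refine ⟨2 * √n, by positivity, 2, two_pos, 1, fun δ hδ hδ1 N hN => ?_⟩
  have hN' : (1 : ℝ) ≤ N := Nat.one_le_cast.2 hN
  obtain ⟨m, hm, hside, hcount⟩ := exists_grid_resolution (n := n) (N := N) (by omega) (by omega)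
    (one_half_pos.trans (half_lt_log_two_mul_div hN' hδ hδ1))
  have hcell (c : Fin n → Fin m) :
      ENNReal.ofReal ((m : ℝ)⁻¹ ^ n) ≤ volume.restrict (unitCube (Fin n)) (gridCell m c) := by
    rw [Measure.restrict_apply (measurableSet_gridCell c),
      inter_eq_self_of_subset_left (gridCell_subset_unitCube c), volume_gridCell, Fintype.card_fin]
  calc ENNReal.ofReal (1 - δ) ≤ 1 - ENNReal.ofReal ((m : ℝ) ^ n * (1 - (m : ℝ)⁻¹ ^ n) ^ N) := by
        rw [ENNReal.ofReal_sub _ hδ.le, ENNReal.ofReal_one]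
        gcongr
        exact hcount.trans (div_log_mul_exp_neg_log_le hN' hδ hδ1)
    _ = 1 - Fintype.card (Fin n → Fin m) *
          (1 - ENNReal.ofReal ((m : ℝ)⁻¹ ^ n)) ^ Fintype.card (Fin N) := by
        rw [ofReal_natCast_pow_mul_one_sub_inv_pow hm, Fintype.card_fun, Fintype.card_fin,
          Fintype.card_fin, Fintype.card_fin, Nat.cast_pow]
    _ ≤ _ := measure_pi_forall_exists_mem_ge _ measurableSet_gridCell hcell
    _ ≤ _ := by
        refine measure_mono fun ω hω x hx =>
          (infDist_range_le_of_forall_gridCell hm hω hx).trans ?_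
        rw [Fintype.card_fin, div_eq_mul_inv, mul_assoc]
        exact mul_le_mul_of_nonneg_left hside (Real.sqrt_nonneg _) |>.trans_eq (by ring)
end
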